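/- arXiv:1212.0359 — 2 statements merged into one kernel-verified Lean document; each statement's English description precedes it below -/
import Mathlib

section
/- For a quiver Q satisfying condition (b) and vertex i ∈ Q₀, the tuple (l_Q(i,j))_{j∈Q₀} lies in L(Q), and it is the unique maximal element (w.r.t. coordinatewise order) among elements (r_j) of L(Q) with r_i = 0. Equivalently, T(i) = ⊕_j τ^{-l_Q(i,j)}P(j) is the unique minimal element of lk_p(P(i)). -/
/-! Combinatorics of quivers: walks in the double quiver, the function `l_Q`,
paths, acyclicity, condition (b), unique sources, and the set `L(Q)`.
A quiver on a vertex type `V` is encoded by its family of arrow types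
`H : V → V → Type`. -/

/-- Walks in the double quiver `Q̃` of the quiver `Q` encoded by `H`:
a step may traverse an arrow forwards (`fwd`) or backwards (`bwd`). -/
inductive DWalk {V : Type} (H : V → V → Type) : V → V → Type where
  | nil : (a : V) → DWalk H a a
  | fwd : {a b c : V} → DWalk H a b → H b c → DWalk H a c
  | bwd : {a b c : V} → DWalk H a b → H c b → DWalk H a c

/-- `c⁺(w)`: the number of forward (original) arrows used by a walk in `Q̃`. -/
def DWalk.cplus {V : Type} {H : V → V → Type} : {a b : V} → DWalk H a b → ℕ
  | _, _, .nil _ => 0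
  | _, _, .fwd w _ => DWalk.cplus w + 1
  | _, _, .bwd w _ => DWalk.cplus w

/-- `l_Q(i,j)`: the minimal number of forward arrows over all walks from `i`
to `j` in the double quiver `Q̃`.  (In particular `l_Q(i,i) = 0`.) -/
noncomputable def ell {V : Type} (H : V → V → Type) (i j : V) : ℕ :=
  sInf {m | ∃ w : DWalk H i j, DWalk.cplus w = m}

/-- Directed paths in the quiver `Q` itself. -/
inductive QPath {V : Type} (H : V → V → Type) : V → V → Type where
  | nil : (a : V) → QPath H a a
  | cons : {a b c : V} → QPath H a b → H b c → QPath H a c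

def QPath.length {V : Type} {H : V → V → Type} : {a b : V} → QPath H a b → ℕ
  | _, _, .nil _ => 0
  | _, _, .cons p _ => QPath.length p + 1

/-- `Q` has no loops and no (nontrivial, directed) cycles. -/
def QuiverAcyclic {V : Type} (H : V → V → Type) : Prop :=
  ∀ (a : V) (p : QPath H a a), QPath.length p = 0

/-- `Q` is connected (any two vertices are joined by a walk in `Q̃`). -/
def QuiverConnected {V : Type} (H : V → V → Type) : Prop :=
  ∀ a b : V, Nonempty (DWalk H a b)

/-- Condition (b): for every vertex `x`, `#s(x) + #t(x) > 1`. -/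
def CondB {V : Type} (H : V → V → Type) [Fintype V] [∀ a b, Fintype (H a b)] : Prop :=
  ∀ x : V, 1 < ∑ y : V, (Fintype.card (H x y) + Fintype.card (H y x))

/-- `s` is the unique source (vertex with no incoming arrows) of `Q`. -/
def UniqueSource {V : Type} (H : V → V → Type) (s : V) : Prop :=
  (∀ y : V, IsEmpty (H y s)) ∧ ∀ t : V, (∀ y : V, IsEmpty (H y t)) → t = s

/-- The set `L(Q) = {(r_i) ∈ ℤ_{≥0}^{Q₀} ∣ r_j ≤ r_i + l_Q(i,j) for all i,j}`. -/
def LSet {V : Type} (H : V → V → Type) : Set (V → ℕ) :=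
  {r | ∀ i j : V, r j ≤ r i + ell H i j}

/-! Concatenating walks in the double quiver adds their forward-arrow counts, so on a connected
quiver `l_Q` satisfies the triangle inequality; this says exactly that each row
`(l_Q(i,j))_j` lies in `L(Q)`. Conversely, the defining inequality `r_j ≤ r_i + l_Q(i,j)` of
`L(Q)` with `r_i = 0` bounds every such `r` by that row. -/

namespace DWalk

variable {V : Type} {H : V → V → Type}

def append : {a b c : V} → DWalk H a b → DWalk H b c → DWalk H a c
  | _, _, _, w, .nil _ => w
  | _, _, _, w, .fwd w' h => .fwd (w.append w') h
  | _, _, _, w, .bwd w' h => .bwd (w.append w') h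

theorem cplus_append : {a b c : V} → (w : DWalk H a b) → (w' : DWalk H b c) →
    (w.append w').cplus = w.cplus + w'.cplus
  | _, _, _, _, .nil _ => by simp only [append, cplus, Nat.add_zero]
  | _, _, _, w, .fwd w' _ => by
    simp only [append, cplus, cplus_append w w', Nat.add_assoc]
  | _, _, _, w, .bwd w' _ => by
    simp only [append, cplus, cplus_append w w']

end DWalk

section ell

variable {V : Type} (H : V → V → Type)

theorem ell_self (i : V) : ell H i i = 0 :=
  Nat.sInf_eq_zero.2 (Or.inl ⟨DWalk.nil i, DWalk.cplus.eq_1 i⟩)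

theorem ell_le_cplus {a b : V} (w : DWalk H a b) : ell H a b ≤ w.cplus :=
  Nat.sInf_le ⟨w, rfl⟩

theorem exists_cplus_eq_ell {a b : V} (h : Nonempty (DWalk H a b)) :
    ∃ w : DWalk H a b, w.cplus = ell H a b :=
  let ⟨w⟩ := h
  Nat.sInf_mem (s := {m | ∃ w : DWalk H a b, w.cplus = m}) ⟨w.cplus, w, rfl⟩

theorem ell_triangle {a b c : V} (hab : Nonempty (DWalk H a b))
    (hbc : Nonempty (DWalk H b c)) : ell H a c ≤ ell H a b + ell H b c := by
  obtain ⟨u, hu⟩ := exists_cplus_eq_ell H hab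
  obtain ⟨v, hv⟩ := exists_cplus_eq_ell H hbc
  calc ell H a c ≤ (u.append v).cplus := ell_le_cplus H _
    _ = ell H a b + ell H b c := by rw [DWalk.cplus_append, hu, hv]

theorem ell_row_mem_LSet (hconn : QuiverConnected H) (i : V) :
    (fun j => ell H i j) ∈ LSet H :=
  fun k j => ell_triangle H (hconn i k) (hconn k j)

theorem le_ell_of_mem_LSet {r : V → ℕ} (hr : r ∈ LSet H) {i : V} (hri : r i = 0) (j : V) :
    r j ≤ ell H i j := by
  simpa [hri] using hr i j

end ell

theorem Ti_unique_minimal_general {V : Type}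
    (H : V → V → Type)
    (hconn : QuiverConnected H)
    (i : V) :
    (fun j => ell H i j) ∈ LSet H ∧ ell H i i = 0 ∧
      ∀ r ∈ LSet H, r i = 0 → ∀ j, r j ≤ ell H i j :=
  ⟨ell_row_mem_LSet H hconn i, ell_self H i, fun _ hr hri => le_ell_of_mem_LSet H hr hri⟩

/-- For a finite connected acyclic quiver `Q` satisfying
condition (b) and a vertex `i`, the tuple `(l_Q(i,j))_{j ∈ Q₀}` lies in `L(Q)`;
its `i`-th coordinate is `0`; and it is the unique maximal element (w.r.t. the
coordinatewise order) among the elements `(r_j)` of `L(Q)` with `r_i = 0`.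
Equivalently, `T(i) = ⊕_j τ^{-l_Q(i,j)} P(j)` is the unique minimal element of
`lk_p(P(i))`. -/
theorem Ti_unique_minimal {V : Type} [Fintype V]
    (H : V → V → Type) [∀ a b, Fintype (H a b)]
    (hacyc : QuiverAcyclic H) (hconn : QuiverConnected H) (hb : CondB H)
    (i : V) :
    (fun j => ell H i j) ∈ LSet H ∧ ell H i i = 0 ∧
      ∀ r ∈ LSet H, r i = 0 → ∀ j, r j ≤ ell H i j :=
  Ti_unique_minimal_general H hconn i
end

section
/- For Q ∈ 𝒜° with unique source s and n vertices, the set {(r_i) ∈ L(Q) : r_s = 0} ⊆ {0,1}^{n-1} (identified via the coordinates at vertices ≠ s) contains (0,...,0) and (1,...,1) and is closed under coordinatewise min and max; i.e., ψ(Q) satisfies conditions (i), (ii), (iii) and hence lies in ℒ. -/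
/-!
Since `l_Q(s,i) ≤ 1`, a vector `r ∈ L(Q)` with `r_s = 0` is a `0/1`-vector, and for `0/1`-vectors
the only binding inequalities of `L(Q)` are `r_j ≤ r_i` for `l_Q(i,j) = 0`, i.e. whenever there is
a directed path from `j` to `i`. So `ψ(Q)` consists of the up-sets of the reachability order that
avoid `s`; they are closed under `min` and `max`, the top vector is one of them because no path
ends in the source, and since `Q` is acyclic, a vector `r ≤ r'` can be raised to `r'` one
coordinate at a time by always choosing a vertex from which no other coordinate still to be
raised is reachable.
-/

variable {V : Type} {H : V → V → Type}

namespace QPath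

def append : {a b c : V} → QPath H a b → QPath H b c → QPath H a c
  | _, _, _, p, .nil _ => p
  | _, _, _, p, .cons q e => .cons (p.append q) e

theorem length_append : ∀ {a b c : V} (p : QPath H a b) (q : QPath H b c),
    (p.append q).length = p.length + q.length
  | _, _, _, _, .nil _ => by rw [append, length, Nat.add_zero]
  | _, _, _, p, .cons q _ => by rw [append, length, length, length_append p q, Nat.add_assoc]

theorem length_pos_of_ne {a b : V} (p : QPath H a b) (h : a ≠ b) : 0 < p.length := by
  cases p with
  | nil => exact absurd rfl h
  | cons => rw [length]; exact Nat.succ_pos _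

end QPath

def DWalk.revPath : {a b : V} → (w : DWalk H a b) → w.cplus = 0 → QPath H b a
  | _, _, .nil _, _ => .nil _
  | _, _, .fwd _ _, h => absurd h (by rw [DWalk.cplus]; exact Nat.succ_ne_zero _)
  | _, _, .bwd w e, h => (QPath.cons (.nil _) e).append (w.revPath (by rwa [DWalk.cplus] at h))

theorem exists_dWalk_cplus_eq_ell (hconn : QuiverConnected H) (i j : V) :
    ∃ w : DWalk H i j, w.cplus = ell H i j :=
  Nat.sInf_mem (s := {m | ∃ w : DWalk H i j, w.cplus = m}) ⟨_, (hconn i j).some, rfl⟩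

theorem nonempty_qPath_of_ell_eq_zero (hconn : QuiverConnected H) {i j : V}
    (h : ell H i j = 0) : Nonempty (QPath H j i) :=
  have ⟨w, hw⟩ := exists_dWalk_cplus_eq_ell hconn i j
  ⟨w.revPath (hw.trans h)⟩

theorem ell_ne_zero_of_forall_isEmpty (hconn : QuiverConnected H) {s : V}
    (hs : ∀ y, IsEmpty (H y s)) {j : V} (hj : j ≠ s) : ell H s j ≠ 0 := by
  intro h
  obtain ⟨p⟩ := nonempty_qPath_of_ell_eq_zero hconn h
  cases p with
  | nil => exact hj rfl
  | cons _ e => exact (hs _).false e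

def PosPath (H : V → V → Type) (i j : V) : Prop :=
  ∃ p : QPath H i j, 0 < p.length

theorem QuiverAcyclic.exists_forall_not_posPath [Finite V] (hacyc : QuiverAcyclic H)
    {D : Set V} (hD : D.Nonempty) : ∃ i ∈ D, ∀ j ∈ D, ¬PosPath H i j := by
  have : IsTrans V (fun j i => PosPath H i j) :=
    ⟨fun _ _ _ ⟨p, hp⟩ ⟨q, hq⟩ => ⟨q.append p, by rw [QPath.length_append]; omega⟩⟩
  have : Std.Irrefl (fun j i => PosPath H i j) := ⟨fun a ⟨p, hp⟩ => hp.ne' (hacyc a p)⟩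
  exact (Finite.wellFounded_of_trans_of_irrefl _).has_min D hD

theorem le_one_of_mem_LSet {s : V} (hl1 : ∀ y, ell H s y ≤ 1) {r : V → ℕ} (hr : r ∈ LSet H)
    (hrs : r s = 0) (i : V) : r i ≤ 1 := by
  have := hr s i
  have := hl1 i
  omega

theorem zero_mem_LSet : (fun _ => 0 : V → ℕ) ∈ LSet H :=
  fun _ _ => Nat.zero_le _

theorem ite_mem_LSet [DecidableEq V] {s : V} (hs : ∀ j ≠ s, ell H s j ≠ 0) :
    (fun i => if i = s then 0 else 1) ∈ LSet H := by
  intro i j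
  rcases eq_or_ne j s with rfl | hj
  · simp
  rcases eq_or_ne i s with rfl | hi
  · simpa [hj, Nat.one_le_iff_ne_zero] using hs j hj
  · simp [hj, hi]

theorem inf_mem_LSet {r r' : V → ℕ} (hr : r ∈ LSet H) (hr' : r' ∈ LSet H) :
    r ⊓ r' ∈ LSet H := fun i j => by
  have := hr i j
  have := hr' i j
  simp only [Pi.inf_apply]
  omega

theorem sup_mem_LSet {r r' : V → ℕ} (hr : r ∈ LSet H) (hr' : r' ∈ LSet H) :
    r ⊔ r' ∈ LSet H := fun i j => by
  have := hr i j
  have := hr' i j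
  simp only [Pi.sup_apply]
  omega

theorem update_mem_LSet [DecidableEq V] {a : V → ℕ} (ha : a ∈ LSet H) {i : V} {c : ℕ}
    (hout : ∀ q ≠ i, a q ≤ c + ell H i q) (hin : ∀ p ≠ i, c ≤ a p + ell H p i) :
    Function.update a i c ∈ LSet H := by
  intro p q
  rcases eq_or_ne p q with rfl | hpq
  · exact Nat.le_add_right _ _
  rcases eq_or_ne q i with rfl | hq
  · simpa [hpq] using hin p hpq
  rcases eq_or_ne p i with rfl | hp
  · simpa [hq] using hout q hq
  · simpa [hp, hq] using ha p q

def PsiStep (H : V → V → Type) (s : V) (a b : V → ℕ) : Prop :=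
  a ∈ LSet H ∧ a s = 0 ∧ b ∈ LSet H ∧ b s = 0 ∧ (∀ i, a i ≤ b i) ∧ ∃! i, a i ≠ b i

section PsiStep

variable [DecidableEq V] {s : V} {a b : V → ℕ}

theorem psiStep_update (hconn : QuiverConnected H) (hl1 : ∀ y, ell H s y ≤ 1)
    (ha : a ∈ LSet H) (has : a s = 0) (hb : b ∈ LSet H) (hbs : b s = 0)
    (hab : ∀ k, a k ≤ b k) {i : V} (hi : a i ≠ b i) (hmax : ∀ j, a j ≠ b j → ¬PosPath H i j) :
    PsiStep H s a (Function.update a i (b i)) := by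
  have hai := hab i
  have hbi := le_one_of_mem_LSet hl1 hb hbs i
  have his : s ≠ i := by rintro rfl; exact hi (has.trans hbs.symm)
  have hout : ∀ q ≠ i, a q ≤ b i + ell H i q := fun q _ => by
    have := le_one_of_mem_LSet hl1 ha has q
    omega
  have hin : ∀ p ≠ i, b i ≤ a p + ell H p i := by
    intro p hp
    by_cases hpi : ell H p i = 0
    · obtain ⟨path⟩ := nonempty_qPath_of_ell_eq_zero hconn hpi
      have hap : a p = b p :=
        not_not.1 fun h => hmax p h ⟨path, path.length_pos_of_ne (Ne.symm hp)⟩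
      have := hb p i
      omega
    · omega
  refine ⟨ha, has, update_mem_LSet ha hout hin, by simp [his, has], fun k => ?_, i, by simpa, ?_⟩
  · rcases eq_or_ne k i with rfl | hk <;> simp [*]
  · intro k hk
    by_contra hki
    simp [hki] at hk

theorem reflTransGen_psiStep_of_le [Fintype V] (hacyc : QuiverAcyclic H)
    (hconn : QuiverConnected H) (hl1 : ∀ y, ell H s y ≤ 1)
    (ha : a ∈ LSet H) (has : a s = 0) (hb : b ∈ LSet H) (hbs : b s = 0) (hab : ∀ k, a k ≤ b k) :
    Relation.ReflTransGen (PsiStep H s) a b := by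
  induction hn : (Finset.univ.filter fun k => a k ≠ b k).card
    using Nat.strong_induction_on generalizing a with
  | _ n ih =>
    rcases Set.eq_empty_or_nonempty {k | a k ≠ b k} with hD | hD
    · obtain rfl : a = b := funext fun k => not_not.1 fun h => hD.subset h
      exact .refl
    obtain ⟨i, hi, hmax⟩ := hacyc.exists_forall_not_posPath hD
    have hstep := psiStep_update hconn hl1 ha has hb hbs hab hi hmax
    have hcard : (Finset.univ.filter fun k => Function.update a i (b i) k ≠ b k) =
        (Finset.univ.filter fun k => a k ≠ b k).erase i := by
      ext k
      rcases eq_or_ne k i with rfl | hk <;> simp [*]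
    refine .head hstep (ih _ ?_ hstep.2.2.1 hstep.2.2.2.1 (fun k => ?_) rfl)
    · rw [← hn, hcard]
      exact Finset.card_erase_lt_of_mem (by simpa using hi)
    · rcases eq_or_ne k i with rfl | hk <;> simp [*]

end PsiStep

theorem psi_mem_L_general {V : Type} [Fintype V] [DecidableEq V]
    (H : V → V → Type)
    (hacyc : QuiverAcyclic H) (hconn : QuiverConnected H)
    (hl1 : ∀ x y : V, ell H x y ≤ 1)
    (s : V) (hs : UniqueSource H s) :
    (∀ r ∈ LSet H, r s = 0 → ∀ i, r i ≤ 1) ∧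
    ((fun _ : V => (0:ℕ)) ∈ LSet H) ∧
    ((fun i => if i = s then 0 else 1) ∈ LSet H ∧
      (fun i => if i = s then (0:ℕ) else 1) s = 0) ∧
    (∀ r ∈ LSet H, r s = 0 → ∀ r' ∈ LSet H, r' s = 0 → (∀ i, r i ≤ r' i) →
      Relation.ReflTransGen
        (fun a b => a ∈ LSet H ∧ a s = 0 ∧ b ∈ LSet H ∧ b s = 0 ∧
          (∀ i, a i ≤ b i) ∧ ∃! i, a i ≠ b i) r r') ∧
    (∀ r ∈ LSet H, r s = 0 → ∀ r' ∈ LSet H, r' s = 0 →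
      ((fun i => min (r i) (r' i)) ∈ LSet H ∧
       (fun i => max (r i) (r' i)) ∈ LSet H)) :=
  ⟨fun _ hr hrs => le_one_of_mem_LSet (hl1 s) hr hrs,
    zero_mem_LSet,
    ⟨ite_mem_LSet fun _ => ell_ne_zero_of_forall_isEmpty hconn hs.1, if_pos rfl⟩,
    fun _ hr hrs _ hr' hr's hle =>
      reflTransGen_psiStep_of_le hacyc hconn (hl1 s) hr hrs hr' hr's hle,
    fun _ hr _ _ hr' _ => ⟨inf_mem_LSet hr hr', sup_mem_LSet hr hr'⟩⟩

/-- For `Q ∈ 𝒜°` (finite connected acyclic, unique source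
`s`, condition (b), `l(Q) ≤ 1`) with `n` vertices, the set
`ψ(Q) = {(r_i) ∈ L(Q) : r_s = 0}` (identified with a subset of `{0,1}^{n-1}`
via the coordinates at vertices `≠ s`) contains the bottom `(0,…,0)` and the
top `(1,…,1)`, every order relation in it is realized by a chain of single
coordinate steps (condition (ii)), and it is closed under coordinatewise `min`
and `max` (condition (iii)); i.e. `ψ(Q)` lies in `ℒ`. -/
theorem psi_mem_L {V : Type} [Fintype V] [DecidableEq V]
    (H : V → V → Type) [∀ a b, Fintype (H a b)]
    (hacyc : QuiverAcyclic H) (hconn : QuiverConnected H) (hb : CondB H)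
    (hl1 : ∀ x y : V, ell H x y ≤ 1)
    (s : V) (hs : UniqueSource H s) :
    (∀ r ∈ LSet H, r s = 0 → ∀ i, r i ≤ 1) ∧
    ((fun _ : V => (0:ℕ)) ∈ LSet H) ∧
    ((fun i => if i = s then 0 else 1) ∈ LSet H ∧
      (fun i => if i = s then (0:ℕ) else 1) s = 0) ∧
    (∀ r ∈ LSet H, r s = 0 → ∀ r' ∈ LSet H, r' s = 0 → (∀ i, r i ≤ r' i) →
      Relation.ReflTransGen
        (fun a b => a ∈ LSet H ∧ a s = 0 ∧ b ∈ LSet H ∧ b s = 0 ∧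
          (∀ i, a i ≤ b i) ∧ ∃! i, a i ≠ b i) r r') ∧
    (∀ r ∈ LSet H, r s = 0 → ∀ r' ∈ LSet H, r' s = 0 →
      ((fun i => min (r i) (r' i)) ∈ LSet H ∧
       (fun i => max (r i) (r' i)) ∈ LSet H)) :=
  psi_mem_L_general H hacyc hconn hl1 s hs
end
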